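/- Let H, E, F be the linear endomorphisms of ℝ² (i.e. Fin 2 → ℝ) given by the matrices !![1, 0; 0, −1], !![0, 1; 0, 0], !![0, 0; 1, 0] respectively (the standard representation of sl₂). For a bilinear form B on ℝ², define Ř X Y Z W := (1/2) * (B (H X) Y) * (B (H Z) W) + (B (E X) Y) * (B (F Z) W) + (B (F X) Y) * (B (E Z) W), the lowered weight tensor of the Casimir ½H⊗H + E⊗F + F⊗E. Then for every nondegenerate symmetric bilinear form B on ℝ² the tensor Ř fails to be skew-symmetric in its first two arguments: there exist X, Y, Z, W ∈ ℝ² with Ř X Y Z W ≠ − Ř Y X Z W. (Example 11: the weight tensor of the standard representation of sl₂ does not have curvature symmetries and hence cannot be realized on a symmetric space.) -/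

import Mathlib

/-- The standard generators of sl₂ acting on ℝ². -/
noncomputable def sl2H : Module.End ℝ (Fin 2 → ℝ) := Matrix.toLin' !![1, 0; 0, -1]
noncomputable def sl2E : Module.End ℝ (Fin 2 → ℝ) := Matrix.toLin' !![0, 1; 0, 0]
noncomputable def sl2F : Module.End ℝ (Fin 2 → ℝ) := Matrix.toLin' !![0, 0; 1, 0]

/-- The lowered weight tensor of the Casimir ½H⊗H + E⊗F + F⊗E of sl₂ in its standard
representation. -/
noncomputable def sl2Rcheck (B : (Fin 2 → ℝ) →ₗ[ℝ] (Fin 2 → ℝ) →ₗ[ℝ] ℝ)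
    (X Y Z W : Fin 2 → ℝ) : ℝ :=
  (1/2) * (B (sl2H X) Y) * (B (sl2H Z) W)
    + (B (sl2E X) Y) * (B (sl2F Z) W) + (B (sl2F X) Y) * (B (sl2E Z) W)

/-!
If `Ř` were skew in its first two arguments, `Ř(X, X, ·, ·)` would vanish for every `X`. But
`Ř(X, X, Z, W) = B(T_X Z, W)` with `T_X = ½ B(HX, X) H + B(FX, X) E + B(EX, X) F`, so
nondegeneracy forces `T_X = 0`, and since `H, E, F` are linearly independent the quadratic forms
`B(HX, X)`, `B(EX, X)`, `B(FX, X)` vanish identically. On the standard basis they produce all four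
entries of `B`, so `B = 0`, contradicting nondegeneracy.
-/

open Matrix

theorem LinearMap.SeparatingLeft.eq_zero_of_forall_apply_eq_zero {R M N P : Type*} [CommSemiring R]
    [AddCommMonoid M] [Module R M] [AddCommMonoid N] [Module R N] [AddCommMonoid P] [Module R P]
    {B : N →ₗ[R] P →ₗ[R] R} (hB : B.SeparatingLeft) {T : M →ₗ[R] N}
    (hT : ∀ Z W, B (T Z) W = 0) : T = 0 :=
  LinearMap.ext fun Z => hB _ (hT Z)

theorem smul_sl2H_add_smul_sl2E_add_smul_sl2F (a b c : ℝ) :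
    a • sl2H + b • sl2E + c • sl2F = toLin' !![a, b; c, -a] := by
  simp only [sl2H, sl2E, sl2F, ← map_smul, ← map_add]
  congr 1
  ext i j
  fin_cases i <;> fin_cases j <;> simp

theorem smul_sl2H_add_smul_sl2E_add_smul_sl2F_eq_zero_iff {a b c : ℝ} :
    a • sl2H + b • sl2E + c • sl2F = 0 ↔ a = 0 ∧ b = 0 ∧ c = 0 := by
  rw [smul_sl2H_add_smul_sl2E_add_smul_sl2F, ← map_zero toLin', toLin'.injective.eq_iff,
    ← Matrix.ext_iff]
  constructor
  · intro h
    exact ⟨h 0 0, h 0 1, h 1 0⟩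
  · rintro ⟨rfl, rfl, rfl⟩ i j
    fin_cases i <;> fin_cases j <;> simp

theorem sl2H_single_zero : sl2H (Pi.single 0 1) = Pi.single 0 1 := by
  rw [sl2H, toLin'_apply, mulVec_single_one]; ext i; fin_cases i <;> simp

theorem sl2H_single_one : sl2H (Pi.single 1 1) = -Pi.single 1 1 := by
  rw [sl2H, toLin'_apply, mulVec_single_one]; ext i; fin_cases i <;> simp

theorem sl2E_single_one : sl2E (Pi.single 1 1) = Pi.single 0 1 := by
  rw [sl2E, toLin'_apply, mulVec_single_one]; ext i; fin_cases i <;> simp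

theorem sl2F_single_zero : sl2F (Pi.single 0 1) = Pi.single 1 1 := by
  rw [sl2F, toLin'_apply, mulVec_single_one]; ext i; fin_cases i <;> simp

theorem sl2Rcheck_self (B : (Fin 2 → ℝ) →ₗ[ℝ] (Fin 2 → ℝ) →ₗ[ℝ] ℝ) (X Z W : Fin 2 → ℝ) :
    sl2Rcheck B X X Z W =
      B (((1/2 * B (sl2H X) X) • sl2H + B (sl2F X) X • sl2E + B (sl2E X) X • sl2F) Z) W := by
  simp only [sl2Rcheck, LinearMap.add_apply, LinearMap.smul_apply, map_add, map_smul, smul_eq_mul]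
  ring

theorem sl2_forms_self_eq_zero_of_sl2Rcheck_self_eq_zero
    {B : (Fin 2 → ℝ) →ₗ[ℝ] (Fin 2 → ℝ) →ₗ[ℝ] ℝ} (hB : B.SeparatingLeft) {X : Fin 2 → ℝ}
    (hX : ∀ Z W, sl2Rcheck B X X Z W = 0) :
    B (sl2H X) X = 0 ∧ B (sl2E X) X = 0 ∧ B (sl2F X) X = 0 := by
  simp only [sl2Rcheck_self] at hX
  obtain ⟨hH, hF, hE⟩ :=
    smul_sl2H_add_smul_sl2E_add_smul_sl2F_eq_zero_iff.mp (hB.eq_zero_of_forall_apply_eq_zero hX)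
  exact ⟨by simpa using hH, hE, hF⟩

theorem eq_zero_of_sl2_forms_self_eq_zero {B : (Fin 2 → ℝ) →ₗ[ℝ] (Fin 2 → ℝ) →ₗ[ℝ] ℝ}
    (hforms : ∀ X, B (sl2H X) X = 0 ∧ B (sl2E X) X = 0 ∧ B (sl2F X) X = 0) : B = 0 := by
  refine LinearMap.ext_basis (Pi.basisFun ℝ (Fin 2)) (Pi.basisFun ℝ (Fin 2)) fun i j => ?_
  have h00 := (hforms (Pi.single 0 1)).1
  have h11 := (hforms (Pi.single 1 1)).1
  have h10 := (hforms (Pi.single 1 1)).2.1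
  have h01 := (hforms (Pi.single 0 1)).2.2
  rw [sl2H_single_zero] at h00
  rw [sl2H_single_one, map_neg, LinearMap.neg_apply, neg_eq_zero] at h11
  rw [sl2E_single_one] at h10
  rw [sl2F_single_zero] at h01
  fin_cases i <;> fin_cases j <;> simpa

theorem sl2_weight_tensor_not_skew_general
    (B : (Fin 2 → ℝ) →ₗ[ℝ] (Fin 2 → ℝ) →ₗ[ℝ] ℝ)
    (hBnd : ∀ X, (∀ Y, B X Y = 0) → X = 0) :
    ∃ X Y Z W : Fin 2 → ℝ, sl2Rcheck B X Y Z W ≠ - sl2Rcheck B Y X Z W := by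
  by_contra! hskew
  have hforms X := sl2_forms_self_eq_zero_of_sl2Rcheck_self_eq_zero hBnd (X := X)
    fun Z W => by linarith [hskew X X Z W]
  exact LinearMap.not_separatingLeft_zero _ _ _ _ (eq_zero_of_sl2_forms_self_eq_zero hforms ▸ hBnd)

/-- Example 11: for no nondegenerate symmetric bilinear form on ℝ² is the lowered weight
tensor of the standard representation of sl₂ skew-symmetric in its first two arguments;
hence this weight tensor cannot be realized on a symmetric space. -/
theorem sl2_weight_tensor_not_skew
    (B : (Fin 2 → ℝ) →ₗ[ℝ] (Fin 2 → ℝ) →ₗ[ℝ] ℝ)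
    (hBsymm : ∀ X Y, B X Y = B Y X)
    (hBnd : ∀ X, (∀ Y, B X Y = 0) → X = 0) :
    ∃ X Y Z W : Fin 2 → ℝ, sl2Rcheck B X Y Z W ≠ - sl2Rcheck B Y X Z W :=
  sl2_weight_tensor_not_skew_general B hBnd
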